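/- arXiv:1603.06311 — 3 statements merged into one kernel-verified Lean document; each statement's English description precedes it below -/
import Mathlib

section
/- Let f : X → Y be a furling of relatively valued graphs, where X and Y are finite. Then for any fixed vertices y, y' of Y and any x' ∈ f⁻¹(y'), the Cartan matrix entries satisfy c_{yy'} = Σ_{x ∈ f⁻¹(y)} c_{xx'}, where c on the left is the Cartan matrix of Y and c on the right is the Cartan matrix of X. -/
open Finset

/-! For loopless graphs the Cartan matrix is `2·δ` minus the edge sums of `η` and of the
transposed `ν`, and each of the three parts sums correctly over the fiber `f⁻¹(y)`: the `δ`
part because `x'` lies in `f⁻¹(y)` exactly when `y = y'`, the edge sums because the furling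
conditions split every edge value of `Y` over the edges of `X` lying above it. -/

/-- The Cartan matrix of a (relatively) valued oriented graph with vertices `V`, edges `E`,
source and target maps `src, tgt` and edge values `η, ν`:  `c i i = 2` and, for `i ≠ j`,
`c i j = −Σ_{e : i→j} η e − Σ_{e : j→i} ν e`. -/
noncomputable def valuedGraphCartan {V E : Type*} [Fintype E] [DecidableEq V]
    (src tgt : E → V) (η ν : E → ℚ) (i j : V) : ℚ :=
  if i = j then 2
  else - (∑ e ∈ univ.filter (fun e => src e = i ∧ tgt e = j), η e)
       - (∑ e ∈ univ.filter (fun e => src e = j ∧ tgt e = i), ν e)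

section EdgeSum

variable {V E M : Type*} [Fintype E] [DecidableEq V] [AddCommMonoid M]

def edgeSum (src tgt : E → V) (g : E → M) (i j : V) : M :=
  ∑ e ∈ univ.filter (fun e => src e = i ∧ tgt e = j), g e

theorem edgeSum_self_of_loopless {src tgt : E → V} (hloops : ∀ e, src e ≠ tgt e)
    (g : E → M) (i : V) : edgeSum src tgt g i i = 0 :=
  sum_eq_zero fun e he => absurd ((mem_filter.mp he).2.1.trans (mem_filter.mp he).2.2.symm)
    (hloops e)

end EdgeSum

theorem valuedGraphCartan_eq_of_loopless {V E : Type*} [Fintype E] [DecidableEq V]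
    {src tgt : E → V} (hloops : ∀ e, src e ≠ tgt e) (η ν : E → ℚ) (i j : V) :
    valuedGraphCartan src tgt η ν i j
      = (if i = j then 2 else 0) - edgeSum src tgt η i j - edgeSum src tgt ν j i := by
  unfold valuedGraphCartan
  rw [← edgeSum, ← edgeSum]
  split_ifs with h
  · rw [h, edgeSum_self_of_loopless hloops, edgeSum_self_of_loopless hloops, sub_zero, sub_zero]
  · rw [zero_sub]

section Homomorphism

variable {VX EX VY EY M : Type*} [Fintype EX] [Fintype EY] [DecidableEq VX] [DecidableEq VY]
  [DecidableEq EY] [AddCommMonoid M]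
  {srcX tgtX : EX → VX} {srcY tgtY : EY → VY} {fV : VX → VY} {fE : EX → EY}

/-- The edges from `a` to `b` are partitioned by their images, all of which run from
`fV a` to `fV b`. -/
theorem sum_edgeSum_fiberwise (hsrc : ∀ e, fV (srcX e) = srcY (fE e))
    (htgt : ∀ e, fV (tgtX e) = tgtY (fE e)) (g : EX → M) (a b : VX) :
    ∑ d ∈ univ.filter (fun d => srcY d = fV a ∧ tgtY d = fV b),
        ∑ d' ∈ univ.filter (fun d' => srcX d' = a ∧ tgtX d' = b ∧ fE d' = d), g d'
      = edgeSum srcX tgtX g a b := by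
  have hfilter : ∀ d : EY, univ.filter (fun d' => srcX d' = a ∧ tgtX d' = b ∧ fE d' = d)
      = (univ.filter (fun d' => srcX d' = a ∧ tgtX d' = b)).filter (fun d' => fE d' = d) := by
    intro d; ext d'; simp [and_assoc]
  simp_rw [hfilter]
  rw [sum_fiberwise_eq_sum_filter, edgeSum]
  refine sum_congr (filter_true_of_mem fun d' hd' => ?_) fun _ _ => rfl
  obtain ⟨hs, ht⟩ := (mem_filter.mp hd').2
  simp only [mem_filter, mem_univ, ← hsrc, ← htgt, hs, ht, and_self]

theorem edgeSum_eq_sum_of_split (hsrc : ∀ e, fV (srcX e) = srcY (fE e))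
    (htgt : ∀ e, fV (tgtX e) = tgtY (fE e)) {gX : EX → M} {gY : EY → M} {y₁ y₂ : VY}
    (s : Finset VX) (p q : VX → VX) (hp : ∀ x ∈ s, fV (p x) = y₁) (hq : ∀ x ∈ s, fV (q x) = y₂)
    (hsplit : ∀ d, srcY d = y₁ → tgtY d = y₂ → gY d = ∑ x ∈ s,
        ∑ d' ∈ univ.filter (fun d' => srcX d' = p x ∧ tgtX d' = q x ∧ fE d' = d), gX d') :
    edgeSum srcY tgtY gY y₁ y₂ = ∑ x ∈ s, edgeSum srcX tgtX gX (p x) (q x) := by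
  rw [edgeSum, sum_congr rfl fun d hd => hsplit d (mem_filter.mp hd).2.1 (mem_filter.mp hd).2.2,
    sum_comm]
  refine sum_congr rfl fun x hx => ?_
  rw [← sum_edgeSum_fiberwise hsrc htgt, hp x hx, hq x hx]

end Homomorphism

theorem furling_cartan_sum_general
    {VX EX VY EY : Type*} [Fintype VX] [Fintype EX] [Fintype EY]
    [DecidableEq VX] [DecidableEq VY] [DecidableEq EY]
    (srcX tgtX : EX → VX) (ηX νX : EX → ℚ)
    (srcY tgtY : EY → VY) (ηY νY : EY → ℚ)
    -- no loops
    (hXloops : ∀ e, srcX e ≠ tgtX e) (hYloops : ∀ e, srcY e ≠ tgtY e)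
    -- graph homomorphism
    (fV : VX → VY) (fE : EX → EY)
    (hsrc : ∀ e, fV (srcX e) = srcY (fE e)) (htgt : ∀ e, fV (tgtX e) = tgtY (fE e))
    -- furling conditions
    (hfurlν : ∀ y y' : VY, ∀ x : VX, fV x = y → ∀ d : EY, srcY d = y → tgtY d = y' →
      νY d = ∑ x' ∈ univ.filter (fun x' => fV x' = y'),
        ∑ d' ∈ univ.filter (fun d' => srcX d' = x ∧ tgtX d' = x' ∧ fE d' = d), νX d')
    (hfurlη : ∀ y y' : VY, ∀ x : VX, fV x = y → ∀ e : EY, srcY e = y' → tgtY e = y →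
      ηY e = ∑ x' ∈ univ.filter (fun x' => fV x' = y'),
        ∑ e' ∈ univ.filter (fun e' => srcX e' = x' ∧ tgtX e' = x ∧ fE e' = e), ηX e')
    -- conclusion
    (y y' : VY) (x' : VX) (hx' : fV x' = y') :
    valuedGraphCartan srcY tgtY ηY νY y y'
      = ∑ x ∈ univ.filter (fun x => fV x = y), valuedGraphCartan srcX tgtX ηX νX x x' := by
  have hfiber : ∀ x ∈ univ.filter (fun x => fV x = y), fV x = y := fun x hx => (mem_filter.mp hx).2
  have hη : edgeSum srcY tgtY ηY y y'
      = ∑ x ∈ univ.filter (fun x => fV x = y), edgeSum srcX tgtX ηX x x' :=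
    edgeSum_eq_sum_of_split hsrc htgt _ (fun x => x) (fun _ => x') hfiber (fun _ _ => hx')
      (hfurlη y' y x' hx')
  have hν : edgeSum srcY tgtY νY y' y
      = ∑ x ∈ univ.filter (fun x => fV x = y), edgeSum srcX tgtX νX x' x :=
    edgeSum_eq_sum_of_split hsrc htgt _ (fun _ => x') (fun x => x) (fun _ _ => hx') hfiber
      (hfurlν y' y x' hx')
  have hδ : (∑ x ∈ univ.filter (fun x => fV x = y), if x = x' then (2 : ℚ) else 0)
      = if y = y' then 2 else 0 := by
    rw [sum_ite_eq']
    simp only [mem_filter, mem_univ, true_and, hx', eq_comm]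
  rw [valuedGraphCartan_eq_of_loopless hYloops,
    sum_congr rfl fun x _ => valuedGraphCartan_eq_of_loopless hXloops ηX νX x x',
    sum_sub_distrib, sum_sub_distrib, hδ, hη, hν]

/-- Let `f : X → Y` be a furling of (finite) relatively valued graphs.  Then
for any fixed vertices `y, y'` of `Y` and any `x' ∈ f⁻¹(y')`, the Cartan matrix entries satisfy
`c_{yy'} = Σ_{x ∈ f⁻¹(y)} c_{xx'}`, where `c` on the left is the Cartan matrix of `Y` and `c`
on the right is the Cartan matrix of `X`.

A relatively valued graph is a finite oriented multigraph without loops together with rationals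
`η e, ν e` on each edge, such that there are positive rationals `d i` on vertices with
`d (src e) * η e = d (tgt e) * ν e`.  A graph homomorphism `(fV, fE)` (commuting with sources
and targets) is a furling if for all `y y' : VY` and every `x` in the fiber over `y`:
`ν d = Σ_{x' ∈ f⁻¹(y')} Σ_{d' : x → x', fE d' = d} ν d'` for every edge `d : y → y'`, and
`η e = Σ_{x' ∈ f⁻¹(y')} Σ_{e' : x' → x, fE e' = e} η e'` for every edge `e : y' → y`. -/
theorem furling_cartan_sum
    {VX EX VY EY : Type*} [Fintype VX] [Fintype EX] [Fintype VY] [Fintype EY]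
    [DecidableEq VX] [DecidableEq VY] [DecidableEq EY]
    (srcX tgtX : EX → VX) (ηX νX : EX → ℚ)
    (srcY tgtY : EY → VY) (ηY νY : EY → ℚ)
    -- no loops
    (hXloops : ∀ e, srcX e ≠ tgtX e) (hYloops : ∀ e, srcY e ≠ tgtY e)
    -- relative valuations
    (dX : VX → ℚ) (hdX : ∀ v, 0 < dX v)
    (hvalX : ∀ e, dX (srcX e) * ηX e = dX (tgtX e) * νX e)
    (dY : VY → ℚ) (hdY : ∀ v, 0 < dY v)
    (hvalY : ∀ e, dY (srcY e) * ηY e = dY (tgtY e) * νY e)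
    -- graph homomorphism
    (fV : VX → VY) (fE : EX → EY)
    (hsrc : ∀ e, fV (srcX e) = srcY (fE e)) (htgt : ∀ e, fV (tgtX e) = tgtY (fE e))
    -- furling conditions
    (hfurlν : ∀ y y' : VY, ∀ x : VX, fV x = y → ∀ d : EY, srcY d = y → tgtY d = y' →
      νY d = ∑ x' ∈ univ.filter (fun x' => fV x' = y'),
        ∑ d' ∈ univ.filter (fun d' => srcX d' = x ∧ tgtX d' = x' ∧ fE d' = d), νX d')
    (hfurlη : ∀ y y' : VY, ∀ x : VX, fV x = y → ∀ e : EY, srcY e = y' → tgtY e = y →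
      ηY e = ∑ x' ∈ univ.filter (fun x' => fV x' = y'),
        ∑ e' ∈ univ.filter (fun e' => srcX e' = x' ∧ tgtX e' = x ∧ fE e' = e), ηX e')
    -- conclusion
    (y y' : VY) (x' : VX) (hx' : fV x' = y') :
    valuedGraphCartan srcY tgtY ηY νY y y'
      = ∑ x ∈ univ.filter (fun x => fV x = y), valuedGraphCartan srcX tgtX ηX νX x x' :=
  furling_cartan_sum_general srcX tgtX ηX νX srcY tgtY ηY νY hXloops hYloops fV fE hsrc htgt hfurlν
    hfurlη y y' x' hx'
end

section
/- Let k be a field of characteristic zero, let A and B be symmetrizable generalized Cartan matrices indexed by finite sets Y and X respectively, and let f : X → Y be a surjection such that for all y, y' ∈ Y and every x' ∈ f⁻¹(y'), A y y' = Σ_{x ∈ f⁻¹(y)} B x x'. Then there is a homomorphism of Lie algebras Matrix.ToLieAlgebra A k → Matrix.ToLieAlgebra B k sending, for each y ∈ Y, the generator E_y to Σ_{x ∈ f⁻¹(y)} E_x, the generator F_y to Σ_{x ∈ f⁻¹(y)} F_x, and the generator H_y to Σ_{x ∈ f⁻¹(y)} H_x. -/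
/-!
Write `E'_y, F'_y, H'_y` for the sums over the fibre `f⁻¹(y)` of the generators `E_x, F_x, H_x`
of the Lie algebra of `B`. It suffices to check that they satisfy the defining relations of the
Lie algebra of `A`. The bracket relations follow by bilinearity from those of `B` and
`A y y' = Σ_{x ∈ f⁻¹(y)} B x x'`. For the Serre relations, the case `y = y'` of the compatibility,
together with `A y y = B x' x' = 2` and `B x x' ≤ 0` off the diagonal, forces `B x x' = 0` for
distinct `x, x'` in one fibre, so the `ad E_x` with `x ∈ f⁻¹(y)` commute. A sum of commuting
operators with `ad(E_x)^{1 - B x x'} E_{x'} = 0` kills `E_{x'}` in `1 + Σ_x (-B x x') = 1 - A y y'`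
steps.
-/

open Finset

/-- `A` is a generalized Cartan matrix: `A s s = 2`, off-diagonal entries are nonpositive,
and `A s t = 0 ↔ A t s = 0`. -/
def IsGCM {S : Type*} (A : Matrix S S ℤ) : Prop :=
  (∀ s, A s s = 2) ∧ (∀ s t, s ≠ t → A s t ≤ 0) ∧ (∀ s t, A s t = 0 ↔ A t s = 0)

/-- `A` is symmetrizable: there are positive rationals `d s` with `d s · A s t = d t · A t s`. -/
def IsSymmetrizable {S : Type*} (A : Matrix S S ℤ) : Prop :=
  ∃ d : S → ℚ, (∀ s, 0 < d s) ∧ ∀ s t, d s * A s t = d t * A t s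

variable (R : Type*) [CommRing R]

/-- The generator `H b` of `Matrix.ToLieAlgebra R A`. -/
noncomputable def genH {B : Type*} [DecidableEq B] (A : Matrix B B ℤ) (b : B) :
    Matrix.ToLieAlgebra R A :=
  LieSubmodule.Quotient.mk (N := CartanMatrix.Relations.toIdeal R A)
    (FreeLieAlgebra.of R (CartanMatrix.Generators.H b))

/-- The generator `E b` of `Matrix.ToLieAlgebra R A`. -/
noncomputable def genE {B : Type*} [DecidableEq B] (A : Matrix B B ℤ) (b : B) :
    Matrix.ToLieAlgebra R A :=
  LieSubmodule.Quotient.mk (N := CartanMatrix.Relations.toIdeal R A)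
    (FreeLieAlgebra.of R (CartanMatrix.Generators.E b))

/-- The generator `F b` of `Matrix.ToLieAlgebra R A`. -/
noncomputable def genF {B : Type*} [DecidableEq B] (A : Matrix B B ℤ) (b : B) :
    Matrix.ToLieAlgebra R A :=
  LieSubmodule.Quotient.mk (N := CartanMatrix.Relations.toIdeal R A)
    (FreeLieAlgebra.of R (CartanMatrix.Generators.F b))

namespace Module.End

variable {S M : Type*} [Semiring S] [AddCommMonoid M] [Module S M]

theorem add_pow_apply_eq_zero_of_commute {a b : Module.End S M} (hab : Commute a b) {v : M}
    {m n : ℕ} (ha : (a ^ (m + 1)) v = 0) (hb : (b ^ (n + 1)) v = 0) :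
    ((a + b) ^ (m + n + 1)) v = 0 := by
  rw [hab.add_pow', LinearMap.sum_apply]
  refine sum_eq_zero fun ⟨i, j⟩ hij => ?_
  rw [HasAntidiagonal.mem_antidiagonal] at hij
  rw [LinearMap.smul_apply, mul_apply]
  by_cases hi : m + 1 ≤ i
  · rw [← mul_apply, (hab.pow_pow i j).eq, mul_apply, pow_map_zero_of_le hi ha, map_zero,
      smul_zero]
  · rw [pow_map_zero_of_le (by omega) hb, map_zero, smul_zero]

theorem sum_pow_apply_eq_zero_of_commute {ι : Type*} [DecidableEq ι] (s : Finset ι)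
    (D : ι → Module.End S M) (m : ι → ℕ) {v : M}
    (hcomm : ∀ i ∈ s, ∀ j ∈ s, Commute (D i) (D j)) (hD : ∀ i ∈ s, (D i ^ (m i + 1)) v = 0) :
    ((∑ i ∈ s, D i) ^ (∑ i ∈ s, m i + 1)) v = 0 := by
  induction s using Finset.induction_on with
  | empty => simp
  | insert a t ha ih =>
    rw [sum_insert ha, sum_insert ha, add_assoc]
    refine add_pow_apply_eq_zero_of_commute
      (Commute.sum_right _ _ _ fun j hj => hcomm a (mem_insert_self a t) j (mem_insert_of_mem hj))
      (hD a (mem_insert_self a t)) (ih ?_ fun i hi => hD i (mem_insert_of_mem hi))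
    exact fun i hi j hj => hcomm i (mem_insert_of_mem hi) j (mem_insert_of_mem hj)

end Module.End

section LieAlgebra

variable {S L L' : Type*} [CommRing S] [LieRing L] [LieAlgebra S L] [LieRing L'] [LieAlgebra S L']

open LieAlgebra

theorem LieAlgebra.ad_sum_pow_apply_eq_zero {ι : Type*} [DecidableEq ι] (s : Finset ι)
    (a : ι → L) (m : ι → ℕ) {v : L} (hcomm : ∀ i ∈ s, ∀ j ∈ s, ⁅a i, a j⁆ = 0)
    (ha : ∀ i ∈ s, (ad S L (a i) ^ (m i + 1)) v = 0) :
    (ad S L (∑ i ∈ s, a i) ^ (∑ i ∈ s, m i + 1)) v = 0 := by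
  rw [map_sum]
  refine Module.End.sum_pow_apply_eq_zero_of_commute s _ m (fun i hi j hj => ?_) ha
  refine LinearMap.ext fun z => ?_
  rw [Module.End.mul_apply, Module.End.mul_apply, ad_apply, ad_apply, ad_apply, ad_apply,
    leibniz_lie, hcomm i hi j hj, zero_lie, zero_add]

theorem LieHom.map_ad_pow_apply (g : L →ₗ⁅S⁆ L') (a b : L) (n : ℕ) :
    g ((ad S L a ^ n) b) = (ad S L' (g a) ^ n) (g b) := by
  induction n with
  | zero => rfl
  | succ n ih => rw [pow_succ', pow_succ', Module.End.mul_apply, Module.End.mul_apply,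
      ad_apply, ad_apply, LieHom.map_lie, ih]

namespace LieIdeal

variable (I : LieIdeal S L)

def mkQ : L →ₗ⁅S⁆ L ⧸ I :=
  { (I : Submodule S L).mkQ with map_lie' := rfl }

def liftQ (g : L →ₗ⁅S⁆ L') (h : I ≤ g.ker) : L ⧸ I →ₗ⁅S⁆ L' :=
  { (I : Submodule S L).liftQ (g : L →ₗ[S] L') fun x hx => LieHom.mem_ker.mp (h hx) with
    map_lie' := by
      rintro ⟨x⟩ ⟨y⟩
      exact g.map_lie x y }

end LieIdeal

end LieAlgebra

section Furling

variable {X Y : Type*} [Fintype X] [DecidableEq Y]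

def IsFurling (A : Matrix Y Y ℤ) (B : Matrix X X ℤ) (p : X → Y) : Prop :=
  ∀ y x', A y (p x') = ∑ x ∈ univ.filter (fun x => p x = y), B x x'

variable {A : Matrix Y Y ℤ} {B : Matrix X X ℤ} {p : X → Y}

namespace IsFurling

theorem eq_zero_of_same_fiber (hp : IsFurling A B p) (hA : ∀ y, A y y = 2)
    (hBdiag : ∀ x, B x x = 2) (hB : ∀ x x', x ≠ x' → B x x' ≤ 0) {x x' : X} (hxx' : p x = p x')
    (hne : x ≠ x') : B x x' = 0 := by
  classical
  have hx' : x' ∈ univ.filter (fun z => p z = p x') := by simp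
  have hsum := hp (p x') x'
  rw [hA, ← add_sum_erase _ _ hx', hBdiag] at hsum
  have hrest : ∑ z ∈ (univ.filter (fun z => p z = p x')).erase x', B z x' = 0 := by omega
  exact (sum_eq_zero_iff_of_nonpos fun z hz => hB z x' (ne_of_mem_erase hz)).1 hrest x
    (by simp [hxx', hne])

theorem neg_toNat_eq_sum (hp : IsFurling A B p) (hB : ∀ x x', x ≠ x' → B x x' ≤ 0) {y : Y}
    {x' : X} (hy : y ≠ p x') :
    (-A y (p x')).toNat = ∑ x ∈ univ.filter (fun x => p x = y), (-B x x').toNat := by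
  have hnonneg : ∀ x ∈ univ.filter (fun x => p x = y), 0 ≤ -B x x' := fun x hx => by
    have hne : x ≠ x' := by
      rintro rfl
      exact hy (mem_filter.mp hx).2.symm
    linarith [hB x x' hne]
  have hsum : -A y (p x') = ∑ x ∈ univ.filter (fun x => p x = y), -B x x' := by
    rw [hp, sum_neg_distrib]
  zify
  rw [Int.toNat_of_nonneg (hsum ▸ sum_nonneg hnonneg), hsum]
  exact sum_congr rfl fun x hx => (Int.toNat_of_nonneg (hnonneg x hx)).symm

end IsFurling

end Furling

namespace CartanMatrix

open LieAlgebra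

variable {L : Type*} [LieRing L] [LieAlgebra R L]

structure ChevalleyRelations {B : Type*} [DecidableEq B] (A : Matrix B B ℤ) (h e f : B → L) :
    Prop where
  lie_h_h : ∀ i j, ⁅h i, h j⁆ = 0
  lie_e_f : ∀ i j, ⁅e i, f j⁆ = if i = j then h i else 0
  lie_h_e : ∀ i j, ⁅h i, e j⁆ = A i j • e j
  lie_h_f : ∀ i j, ⁅h i, f j⁆ = -(A i j • f j)
  serre_e : ∀ i j, i ≠ j → (ad R L (e i) ^ ((-A i j).toNat + 1)) (e j) = 0
  serre_f : ∀ i j, i ≠ j → (ad R L (f i) ^ ((-A i j).toNat + 1)) (f j) = 0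

section Presentation

variable {B : Type*} [DecidableEq B]

theorem chevalleyRelations_gen (A : Matrix B B ℤ) :
    ChevalleyRelations R A (genH R A) (genE R A) (genF R A) := by
  let π : FreeLieAlgebra R (Generators B) →ₗ⁅R⁆ Matrix.ToLieAlgebra R A :=
    (Relations.toIdeal R A).mkQ
  have hπ : ∀ r ∈ Relations.toSet R A, π r = 0 := fun r hr =>
    (LieSubmodule.Quotient.mk_eq_zero' (N := Relations.toIdeal R A)).2
      (LieSubmodule.subset_lieSpan hr)
  have hH : ∀ i, π (FreeLieAlgebra.of R (Generators.H i)) = genH R A i := fun _ => rfl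
  have hE : ∀ i, π (FreeLieAlgebra.of R (Generators.E i)) = genE R A i := fun _ => rfl
  have hF : ∀ i, π (FreeLieAlgebra.of R (Generators.F i)) = genF R A i := fun _ => rfl
  refine ⟨fun i j => ?_, fun i j => ?_, fun i j => ?_, fun i j => ?_, fun i j _ => ?_,
    fun i j _ => ?_⟩
  · simpa [Relations.HH, hH] using hπ _ (.inl <| .inl <| .inl <| .inl <| .inl ⟨(i, j), rfl⟩)
  · have := hπ _ (.inl <| .inl <| .inl <| .inl <| .inr ⟨(i, j), rfl⟩)
    split_ifs with hij
    · subst hij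
      simpa [Relations.EF, hE, hF, hH, sub_eq_zero] using this
    · simpa [Relations.EF, hE, hF, hij] using this
  · simpa [Relations.HE, hH, hE, sub_eq_zero] using
      hπ _ (.inl <| .inl <| .inl <| .inr ⟨(i, j), rfl⟩)
  · simpa [Relations.HF, hH, hF, add_eq_zero_iff_eq_neg] using
      hπ _ (.inl <| .inl <| .inr ⟨(i, j), rfl⟩)
  · simpa [Relations.adE, LieHom.map_ad_pow_apply, hE, pow_succ] using
      hπ _ (.inl <| .inr ⟨(i, j), rfl⟩)
  · simpa [Relations.adF, LieHom.map_ad_pow_apply, hF, pow_succ] using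
      hπ _ (.inr ⟨(i, j), rfl⟩)

namespace ChevalleyRelations

variable {R} {A : Matrix B B ℤ} {h e f : B → L}

noncomputable def lift (hrel : ChevalleyRelations R A h e f) : Matrix.ToLieAlgebra R A →ₗ⁅R⁆ L :=
  (Relations.toIdeal R A).liftQ
    (FreeLieAlgebra.lift R fun | .H i => h i | .E i => e i | .F i => f i) <| by
    rw [Relations.toIdeal, LieSubmodule.lieSpan_le]
    rintro r (((((⟨⟨i, j⟩, rfl⟩ | ⟨⟨i, j⟩, rfl⟩) | ⟨⟨i, j⟩, rfl⟩) | ⟨⟨i, j⟩, rfl⟩) |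
      ⟨⟨i, j⟩, rfl⟩) | ⟨⟨i, j⟩, rfl⟩) <;> rw [SetLike.mem_coe, LieHom.mem_ker]
    · simp [Relations.HH, hrel.lie_h_h]
    · by_cases hij : i = j
      · subst hij; simp [Relations.EF, hrel.lie_e_f]
      · simp [Relations.EF, hrel.lie_e_f, hij]
    · simp [Relations.HE, hrel.lie_h_e]
    · simp [Relations.HF, hrel.lie_h_f]
    · by_cases hij : i = j
      · subst hij; simp [Relations.adE]
      · simpa [Relations.adE, LieHom.map_ad_pow_apply, pow_succ] using hrel.serre_e i j hij
    · by_cases hij : i = j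
      · subst hij; simp [Relations.adF]
      · simpa [Relations.adF, LieHom.map_ad_pow_apply, pow_succ] using hrel.serre_f i j hij

theorem lift_genH (hrel : ChevalleyRelations R A h e f) (i : B) :
    hrel.lift (genH R A i) = h i :=
  FreeLieAlgebra.lift_of_apply _ _

theorem lift_genE (hrel : ChevalleyRelations R A h e f) (i : B) :
    hrel.lift (genE R A i) = e i :=
  FreeLieAlgebra.lift_of_apply _ _

theorem lift_genF (hrel : ChevalleyRelations R A h e f) (i : B) :
    hrel.lift (genF R A i) = f i :=
  FreeLieAlgebra.lift_of_apply _ _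

end ChevalleyRelations

end Presentation

section Furling

variable {R} {X Y : Type*} [Fintype X] [DecidableEq X]
  [DecidableEq Y] {A : Matrix Y Y ℤ} {B : Matrix X X ℤ} {p : X → Y}

theorem ad_sum_fiber_pow_apply_eq_zero (hp : IsFurling A B p) (hA : ∀ y, A y y = 2)
    (hBdiag : ∀ x, B x x = 2) (hB : ∀ x x', x ≠ x' → B x x' ≤ 0) {g : X → L}
    (hg : ∀ x x', x ≠ x' → (ad R L (g x) ^ ((-B x x').toNat + 1)) (g x') = 0) {y y' : Y}
    (hyy' : y ≠ y') :
    (ad R L (∑ x ∈ univ.filter (fun x => p x = y), g x) ^ ((-A y y').toNat + 1))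
      (∑ x' ∈ univ.filter (fun x => p x = y'), g x') = 0 := by
  rw [map_sum]
  refine sum_eq_zero fun x' hx' => ?_
  obtain rfl : p x' = y' := (mem_filter.mp hx').2
  rw [hp.neg_toNat_eq_sum hB hyy']
  refine ad_sum_pow_apply_eq_zero _ g _ (fun a ha b hb => ?_) fun x hx => hg x x' ?_
  · rcases eq_or_ne a b with rfl | hab
    · exact lie_self _
    · have hBab := hp.eq_zero_of_same_fiber hA hBdiag hB
        ((mem_filter.mp ha).2.trans (mem_filter.mp hb).2.symm) hab
      simpa [hBab] using hg a b hab
  · rintro rfl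
    exact hyy' (mem_filter.mp hx).2.symm

namespace ChevalleyRelations

variable {h e f : X → L}

theorem furl (hrel : ChevalleyRelations R B h e f) (hp : IsFurling A B p) (hA : ∀ y, A y y = 2)
    (hBdiag : ∀ x, B x x = 2) (hB : ∀ x x', x ≠ x' → B x x' ≤ 0) :
    ChevalleyRelations R A (fun y => ∑ x ∈ univ.filter (fun x => p x = y), h x)
      (fun y => ∑ x ∈ univ.filter (fun x => p x = y), e x)
      (fun y => ∑ x ∈ univ.filter (fun x => p x = y), f x) where
  lie_h_h y y' := by
    simp [sum_lie_sum, hrel.lie_h_h]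
  lie_e_f y y' := by
    simp_rw [sum_lie_sum, hrel.lie_e_f]
    split_ifs with hyy'
    · subst hyy'
      exact sum_congr rfl fun x hx => by rw [sum_ite_eq, if_pos hx]
    · refine sum_eq_zero fun x hx => sum_eq_zero fun x' hx' => if_neg ?_
      rintro rfl
      exact hyy' ((mem_filter.mp hx).2.symm.trans (mem_filter.mp hx').2)
  lie_h_e y y' := by
    rw [sum_lie_sum, sum_comm, smul_sum]
    refine sum_congr rfl fun x' hx' => ?_
    obtain rfl := (mem_filter.mp hx').2
    simp_rw [hrel.lie_h_e]
    rw [← sum_smul, hp]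
  lie_h_f y y' := by
    rw [sum_lie_sum, sum_comm, smul_sum, ← sum_neg_distrib]
    refine sum_congr rfl fun x' hx' => ?_
    obtain rfl := (mem_filter.mp hx').2
    simp_rw [hrel.lie_h_f]
    rw [sum_neg_distrib, ← sum_smul, hp]
  serre_e _ _ := ad_sum_fiber_pow_apply_eq_zero hp hA hBdiag hB hrel.serre_e
  serre_f _ _ := ad_sum_fiber_pow_apply_eq_zero hp hA hBdiag hB hrel.serre_f

end ChevalleyRelations

end Furling

end CartanMatrix

theorem furling_lie_algebra_hom_general (k : Type*) [Field k]
    {Y X : Type*} [Fintype X] [DecidableEq Y] [DecidableEq X]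
    (A : Matrix Y Y ℤ) (B : Matrix X X ℤ)
    (hA : IsGCM A) (hB : IsGCM B)
    (f : X → Y)
    (hcompat : ∀ y y' : Y, ∀ x' : X, f x' = y' →
      A y y' = ∑ x ∈ univ.filter (fun x => f x = y), B x x') :
    ∃ φ : Matrix.ToLieAlgebra k A →ₗ⁅k⁆ Matrix.ToLieAlgebra k B,
      ∀ y : Y,
        φ (genE k A y) = ∑ x ∈ univ.filter (fun x => f x = y), genE k B x ∧
        φ (genF k A y) = ∑ x ∈ univ.filter (fun x => f x = y), genF k B x ∧
        φ (genH k A y) = ∑ x ∈ univ.filter (fun x => f x = y), genH k B x := by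
  have hp : IsFurling A B f := fun y x' => hcompat y (f x') x' rfl
  have hrel := (CartanMatrix.chevalleyRelations_gen k B).furl hp hA.1 hB.1 hB.2.1
  exact ⟨hrel.lift, fun y => ⟨hrel.lift_genE y, hrel.lift_genF y, hrel.lift_genH y⟩⟩

/-- Let `k` be a field of characteristic zero, let `A` and `B` be
symmetrizable generalized Cartan matrices indexed by finite sets `Y` and `X` respectively,
and let `f : X → Y` be a surjection such that for all `y, y' ∈ Y` and every `x' ∈ f⁻¹(y')`,
`A y y' = Σ_{x ∈ f⁻¹(y)} B x x'`.  Then there is a homomorphism of Lie algebras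
`Matrix.ToLieAlgebra A k → Matrix.ToLieAlgebra B k` sending, for each `y ∈ Y`, the generator
`E_y` to `Σ_{x ∈ f⁻¹(y)} E_x`, the generator `F_y` to `Σ_{x ∈ f⁻¹(y)} F_x`, and the generator
`H_y` to `Σ_{x ∈ f⁻¹(y)} H_x`. -/
theorem furling_lie_algebra_hom (k : Type*) [Field k] [CharZero k]
    {Y X : Type*} [Fintype Y] [Fintype X] [DecidableEq Y] [DecidableEq X]
    (A : Matrix Y Y ℤ) (B : Matrix X X ℤ)
    (hA : IsGCM A) (hB : IsGCM B) (hAsym : IsSymmetrizable A) (hBsym : IsSymmetrizable B)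
    (f : X → Y) (hf : Function.Surjective f)
    (hcompat : ∀ y y' : Y, ∀ x' : X, f x' = y' →
      A y y' = ∑ x ∈ univ.filter (fun x => f x = y), B x x') :
    ∃ φ : Matrix.ToLieAlgebra k A →ₗ⁅k⁆ Matrix.ToLieAlgebra k B,
      ∀ y : Y,
        φ (genE k A y) = ∑ x ∈ univ.filter (fun x => f x = y), genE k B x ∧
        φ (genF k A y) = ∑ x ∈ univ.filter (fun x => f x = y), genF k B x ∧
        φ (genH k A y) = ∑ x ∈ univ.filter (fun x => f x = y), genH k B x :=
  furling_lie_algebra_hom_general k A B hA hB f hcompat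
end

section
/- Let K be a field, let A be a finite-dimensional unital associative K-algebra, let x_1, …, x_m ∈ A be pairwise commuting elements, let u_1, …, u_m ∈ K, and set N = dim_K A. For each k let V_k = {a ∈ A : (x_k − u_k)^N·a = 0} and W_k = (x_k − u_k)^N·A. Then A = (⋂_{k=1}^m V_k) ⊕ (Σ_{k=1}^m W_k) as K-vector spaces, and there exists a unique idempotent e ∈ A such that e·A ⊆ ⋂_k V_k and (1 − e)·A ⊆ Σ_k W_k; moreover e·A = ⋂_k V_k and e commutes with each x_k. -/
/-!
Let `y_k = x_k - u_k`. In the commutative subalgebra generated by the `x_k`, whose dimension is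
at most `N`, left multiplication by `y_k^N` and by `y_k^{2N}` have the same range, so
`y_k^N = y_k^{2N} c_k` and `f_k = y_k^N c_k` satisfies `y_k^N (1 - f_k) = 0`.
Then `e = ∏ (1 - f_k)` is killed by every `y_k^N`, and `1 - e` lies in the ideal generated by the
`y_k^N` because every factor is `1` modulo that ideal. Hence `e` maps `A` into `⋂ V_k` and is the
identity there, while `1 - e` maps `A` into `Σ W_k` and `e` kills `Σ W_k`; both the decomposition
and the uniqueness of `e` follow.
-/

open Module LinearMap

theorem Module.End.range_pow_eq_range_pow_finrank_of_le {K V : Type*} [Field K] [AddCommGroup V]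
    [Module K V] [FiniteDimensional K V] {f : End K V} {m : ℕ} (hm : finrank K V ≤ m) :
    range (f ^ m) = range (f ^ finrank K V) := by
  refine Submodule.eq_of_le_of_finrank_le ?_ ?_
  · obtain ⟨k, rfl⟩ := Nat.exists_eq_add_of_le hm
    rw [pow_add, End.mul_eq_comp]
    exact range_comp_le_range _ _
  · have hm' := finrank_range_add_finrank_ker (f ^ m)
    have hn := finrank_range_add_finrank_ker (f ^ finrank K V)
    rw [End.ker_pow_eq_ker_pow_finrank_of_le hm] at hm'
    omega

theorem exists_pow_sq_mul_eq_pow {K A : Type*} [Field K] [Ring A] [Algebra K A]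
    [FiniteDimensional K A] (b : A) {n : ℕ} (hn : finrank K A ≤ n) :
    ∃ c, (b ^ n) ^ 2 * c = b ^ n := by
  have h : b ^ n ∈ range (mulLeft K b ^ (n * 2)) := by
    rw [End.range_pow_eq_range_pow_finrank_of_le (hn.trans (by omega)),
      ← End.range_pow_eq_range_pow_finrank_of_le hn, pow_mulLeft]
    exact ⟨1, mul_one _⟩
  obtain ⟨c, hc⟩ := h
  exact ⟨c, by rwa [pow_mulLeft, pow_mul, mulLeft_apply] at hc⟩

theorem exists_mul_eq_zero_and_one_sub_mem_span_range {R ι : Type*} [CommRing R] [Fintype ι]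
    (z c : ι → R) (h : ∀ k, z k ^ 2 * c k = z k) :
    ∃ e, (∀ k, z k * e = 0) ∧ 1 - e ∈ Ideal.span (Set.range z) := by
  classical
  refine ⟨∏ k, (1 - z k * c k), fun k => ?_, ?_⟩
  · have hk : z k * (1 - z k * c k) = 0 := by linear_combination -(h k)
    rw [← Finset.mul_prod_erase _ _ (Finset.mem_univ k), ← mul_assoc, hk, zero_mul]
  · have hz : ∀ k, Ideal.Quotient.mk (Ideal.span (Set.range z)) (z k) = 0 := fun k =>
      Ideal.Quotient.eq_zero_iff_mem.mpr (Ideal.subset_span ⟨k, rfl⟩)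
    rw [← Ideal.Quotient.eq_zero_iff_mem, map_sub, map_one, map_prod]
    simp [hz]

open scoped IsMulCommutative in
theorem exists_mem_adjoin_pow_mul_eq_zero {K A ι : Type*} [Field K] [Ring A] [Algebra K A]
    [FiniteDimensional K A] [Fintype ι] (y : ι → A) (hy : ∀ k l, Commute (y k) (y l)) {N : ℕ}
    (hN : finrank K A ≤ N) :
    ∃ e ∈ Algebra.adjoin K (Set.range y), ∃ b : ι → A,
      (∀ k, b k ∈ Algebra.adjoin K (Set.range y)) ∧
      (∀ k, y k ^ N * e = 0) ∧ ∑ k, b k * y k ^ N = 1 - e := by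
  set B := Algebra.adjoin K (Set.range y)
  have : IsMulCommutative B := Algebra.isMulCommutative_adjoin K (by
    rintro _ ⟨k, rfl⟩ _ ⟨l, rfl⟩
    exact (hy k l).eq)
  let yB : ι → B := fun k => ⟨y k, Algebra.subset_adjoin ⟨k, rfl⟩⟩
  have hB : finrank K B ≤ N := (Submodule.finrank_le (Subalgebra.toSubmodule B)).trans hN
  choose c hc using fun k => exists_pow_sq_mul_eq_pow (yB k) hB
  obtain ⟨e, hze, he⟩ := exists_mul_eq_zero_and_one_sub_mem_span_range _ c hc
  obtain ⟨b, hb⟩ := Ideal.mem_span_range_iff_exists_fun.mp he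
  refine ⟨e, e.2, fun k => b k, fun k => (b k).2, fun k => congrArg Subtype.val (hze k), ?_⟩
  simpa using congrArg Subtype.val hb

section mulLeft

variable {K A ι : Type*} [CommSemiring K] [Semiring A] [Algebra K A] {z : ι → A}

theorem mul_mem_iInf_ker_mulLeft {e : A} (h : ∀ k, z k * e = 0) (a : A) :
    e * a ∈ ⨅ k, ker (mulLeft K (z k)) :=
  Submodule.mem_iInf _ |>.mpr fun k => by simp [← mul_assoc, h k]

theorem mul_mem_iSup_range_mulLeft [Fintype ι] {f : A} {b : ι → A} (h : ∑ k, z k * b k = f)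
    (a : A) : f * a ∈ ⨆ k, range (mulLeft K (z k)) := by
  rw [← h, Finset.sum_mul]
  exact Submodule.sum_mem _ fun k _ => Submodule.mem_iSup_of_mem k ⟨b k * a, by simp [mul_assoc]⟩

theorem mul_eq_zero_of_mem_iInf_ker_mulLeft [Fintype ι] {f : A} {b : ι → A}
    (h : ∑ k, b k * z k = f) {p : A} (hp : p ∈ ⨅ k, ker (mulLeft K (z k))) : f * p = 0 := by
  simp only [Submodule.mem_iInf, mem_ker, mulLeft_apply] at hp
  rw [← h, Finset.sum_mul]
  exact Finset.sum_eq_zero fun k _ => by rw [mul_assoc, hp k, mul_zero]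

theorem mul_eq_zero_of_mem_iSup_range_mulLeft {e : A} (h : ∀ k, e * z k = 0) {q : A}
    (hq : q ∈ ⨆ k, range (mulLeft K (z k))) : e * q = 0 := by
  induction hq using Submodule.iSup_induction' with
  | mem k q hq =>
    obtain ⟨a, rfl⟩ := hq
    simp [← mul_assoc, h k]
  | zero => exact mul_zero e
  | add p q _ _ hp hq => rw [mul_add, hp, hq, add_zero]

end mulLeft

section Complement

variable {K A : Type*} [Ring K] [Ring A] [Module K A] {P Q : Submodule K A} {e : A}

theorem isCompl_of_forall_mul_mem (hP : ∀ a, e * a ∈ P) (hQ : ∀ a, (1 - e) * a ∈ Q)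
    (hfix : ∀ p ∈ P, e * p = p) (hkill : ∀ q ∈ Q, e * q = 0) : IsCompl P Q := by
  refine ⟨Submodule.disjoint_def.mpr fun p hp hq => (hfix p hp).symm.trans (hkill p hq),
    codisjoint_iff.mpr (eq_top_iff.mpr fun a _ => ?_)⟩
  simpa [sub_mul] using Submodule.add_mem_sup (hP a) (hQ a)

theorem isIdempotentElem_of_forall_mul_mem (hP : ∀ a, e * a ∈ P) (hfix : ∀ p ∈ P, e * p = p) :
    IsIdempotentElem e := by
  simpa [IsIdempotentElem] using hfix (e * 1) (hP 1)

theorem range_mul_eq_of_forall_mul_mem (hP : ∀ a, e * a ∈ P) (hfix : ∀ p ∈ P, e * p = p) :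
    Set.range (e * ·) = P :=
  Set.Subset.antisymm (Set.range_subset_iff.mpr hP) fun p hp => ⟨p, hfix p hp⟩

theorem eq_of_forall_mul_mem (hPQ : Disjoint P Q) (hP : ∀ a, e * a ∈ P)
    (hQ : ∀ a, (1 - e) * a ∈ Q) {e' : A} (hP' : ∀ a, e' * a ∈ P) (hQ' : ∀ a, (1 - e') * a ∈ Q) :
    e' = e := by
  have hPdiff : e' - e ∈ P := by simpa using sub_mem (hP' 1) (hP 1)
  have hQdiff : e' - e ∈ Q := by simpa using sub_mem (hQ 1) (hQ' 1)
  exact sub_eq_zero.mp (Submodule.disjoint_def.mp hPQ _ hPdiff hQdiff)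

end Complement

/-- Let `K` be a field, `A` a finite-dimensional unital associative
`K`-algebra, `x_1, …, x_m ∈ A` pairwise commuting, `u_1, …, u_m ∈ K`, and `N = dim_K A`.
For each `k` let `V_k = {a : (x_k − u_k)^N · a = 0}` and `W_k = (x_k − u_k)^N · A`.  Then
`A = (⋂_k V_k) ⊕ (Σ_k W_k)` as `K`-vector spaces, and there exists a unique idempotent
`e ∈ A` such that `e·A ⊆ ⋂_k V_k` and `(1 − e)·A ⊆ Σ_k W_k`; moreover `e·A = ⋂_k V_k` and
`e` commutes with each `x_k`. -/
theorem fitting_idempotent_simultaneous (K : Type*) [Field K] (A : Type*) [Ring A]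
    [Algebra K A] [FiniteDimensional K A] (m : ℕ) (x : Fin m → A) (u : Fin m → K)
    (hcomm : ∀ k l, Commute (x k) (x l))
    (N : ℕ) (hN : N = Module.finrank K A)
    (V W : Fin m → Submodule K A)
    (hV : ∀ k, V k = LinearMap.ker (LinearMap.mulLeft K ((x k - u k • (1 : A)) ^ N)))
    (hW : ∀ k, W k = LinearMap.range (LinearMap.mulLeft K ((x k - u k • (1 : A)) ^ N))) :
    IsCompl (⨅ k, V k) (⨆ k, W k) ∧
    ∃ e : A,
      (IsIdempotentElem e ∧ (∀ a, e * a ∈ ⨅ k, V k) ∧ (∀ a, (1 - e) * a ∈ ⨆ k, W k)) ∧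
      (∀ e' : A, IsIdempotentElem e' → (∀ a, e' * a ∈ ⨅ k, V k) →
        (∀ a, (1 - e') * a ∈ ⨆ k, W k) → e' = e) ∧
      Set.range (fun a => e * a) = ((⨅ k, V k : Submodule K A) : Set A) ∧
      (∀ k, Commute e (x k)) := by
  obtain rfl : V = _ := funext hV
  obtain rfl : W = _ := funext hW
  set y : Fin m → A := fun k => x k - u k • (1 : A)
  have hyx : ∀ k l, Commute (y k) (x l) := fun k l =>
    (hcomm k l).sub_left ((Commute.one_left _).smul_left _)
  have hyy : ∀ k l, Commute (y k) (y l) := fun k l =>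
    (hyx k l).sub_right ((Commute.one_right _).smul_right _)
  obtain ⟨e, he, b, hb, hze, hsum⟩ := exists_mem_adjoin_pow_mul_eq_zero (K := K) y hyy hN.ge
  have hcomm_pow : ∀ a ∈ Algebra.adjoin K (Set.range y), ∀ k, Commute a (y k ^ N) :=
    fun a ha k => (Algebra.commute_of_mem_adjoin_of_forall_mem_commute ha
      (by rintro _ ⟨l, rfl⟩; exact ((hyy l k).pow_right N).symm)).symm
  have hez : ∀ k, e * y k ^ N = 0 := fun k => (hcomm_pow e he k).eq.trans (hze k)
  have hsum' : ∑ k, y k ^ N * b k = 1 - e :=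
    (Finset.sum_congr rfl fun k _ => (hcomm_pow _ (hb k) k).eq.symm).trans hsum
  have hP := mul_mem_iInf_ker_mulLeft (K := K) hze
  have hQ := mul_mem_iSup_range_mulLeft (K := K) hsum'
  have hfix : ∀ p ∈ ⨅ k, ker (mulLeft K (y k ^ N)), e * p = p := fun p hp => by
    simpa [sub_mul, sub_eq_zero, eq_comm] using mul_eq_zero_of_mem_iInf_ker_mulLeft hsum hp
  have hkill : ∀ q ∈ ⨆ k, range (mulLeft K (y k ^ N)), e * q = 0 := fun q hq =>
    mul_eq_zero_of_mem_iSup_range_mulLeft hez hq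
  have hcompl := isCompl_of_forall_mul_mem hP hQ hfix hkill
  refine ⟨hcompl, e, ⟨isIdempotentElem_of_forall_mul_mem hP hfix, hP, hQ⟩,
    fun e' _ hP' hQ' => eq_of_forall_mul_mem hcompl.disjoint hP hQ hP' hQ',
    range_mul_eq_of_forall_mul_mem hP hfix, fun k => ?_⟩
  exact (Algebra.commute_of_mem_adjoin_of_forall_mem_commute he
    (by rintro _ ⟨l, rfl⟩; exact (hyx l k).symm)).symm
end
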